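/- Suppose Assumption 1 holds and let φ : ℝ → ℝ be a convex function with E[φ(Y)] < ∞. If E[φ(X'β)] = ∞ for all β ≠ 0_p, then the identified set B = {β ∈ ℝ^p : Y₀ ⪰cx X₀'β} equals {0_p}; in particular β₀ = 0_p. -/

import Mathlib

open MeasureTheory ProbabilityTheory Filter Set

noncomputable section

variable {Ω : Type*} [MeasurableSpace Ω]

/-- The centered version `A₀ = A - E[A]` of a real random variable. -/
def cent (μ : Measure Ω) (f : Ω → ℝ) : Ω → ℝ := fun ω => f ω - ∫ ω', f ω' ∂μ

/-- The centered version `X₀ = X - E[X]` of an `ℝ^p`-valued random vector. -/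
def centV {p : ℕ} (μ : Measure Ω) (X : Ω → EuclideanSpace ℝ (Fin p)) :
    Ω → EuclideanSpace ℝ (Fin p) := fun ω => X ω - ∫ ω', X ω' ∂μ

/-- Euclidean inner product `x'y`. -/
def dotp {p : ℕ} (x y : EuclideanSpace ℝ (Fin p)) : ℝ := ∑ i, x i * y i

/-- `A` dominates `B` in the convex order: for every convex `φ : ℝ → ℝ`,
`E[φ(B)] ≤ E[φ(A)]`, where both expectations are well defined in `(-∞, +∞]`
(any convex `φ` is bounded below by an affine function, so for a random variable
with finite mean the expectation is `+∞` exactly when `φ ∘ ·` is not integrable). -/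
def ConvexOrdGE (μ : Measure Ω) (A B : Ω → ℝ) : Prop :=
  ∀ φ : ℝ → ℝ, ConvexOn ℝ Set.univ φ →
    Integrable (fun ω => φ (A ω)) μ →
      Integrable (fun ω => φ (B ω)) μ ∧ ∫ ω, φ (B ω) ∂μ ≤ ∫ ω, φ (A ω) ∂μ

/-- The cumulative distribution function of a real random variable. -/
def cdfRV (μ : Measure Ω) (A : Ω → ℝ) : ℝ → ℝ := fun t => (μ {ω | A ω ≤ t}).toReal

/-- Generalized inverse (quantile function) `F⁻¹(t) = inf {x : t ≤ F x}` of a cdf. -/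
def qf (F : ℝ → ℝ) : ℝ → ℝ := fun t => sInf {x | t ≤ F x}

/-- The ratio of integrated quantiles `R(α, F, G)`. -/
def Rratio (α : ℝ) (F G : ℝ → ℝ) : ℝ := (∫ t in α..1, qf F t) / (∫ t in α..1, qf G t)

/-- `S(F, G) = inf_{α ∈ (0,1)} R(α, F, G)`. -/
def Sinf (F G : ℝ → ℝ) : ℝ := sInf {r | ∃ α ∈ Set.Ioo (0:ℝ) 1, r = Rratio α F G}

/-- `S_ε(F, G) = min_{α ∈ [ε, 1-ε]} R(α, F, G)`. -/
def Seps (ε : ℝ) (F G : ℝ → ℝ) : ℝ := sInf {r | ∃ α ∈ Set.Icc ε (1 - ε), r = Rratio α F G}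

/-- The covariance matrix `Var(X)` of an `ℝ^p`-valued random vector. -/
def covMatrix {p : ℕ} (μ : Measure Ω) (X : Ω → EuclideanSpace ℝ (Fin p)) :
    Matrix (Fin p) (Fin p) ℝ :=
  Matrix.of fun i j =>
    ∫ ω, (X ω i - ∫ ω', X ω' i ∂μ) * (X ω j - ∫ ω', X ω' j ∂μ) ∂μ

/-- The identified set `B = {β ∈ ℝ^p : Y₀ ⪰cx X₀'β}`. -/
def Bset {p : ℕ} (μ : Measure Ω) (Y : Ω → ℝ) (X : Ω → EuclideanSpace ℝ (Fin p)) :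
    Set (EuclideanSpace ℝ (Fin p)) :=
  {β | ConvexOrdGE μ (cent μ Y) (fun ω => dotp (centV μ X ω) β)}

/-- The regularized outer set `B_ε = {λ q : q ∈ S_p, 0 ≤ λ ≤ S_ε(F_{Y₀}, F_{X₀'q})}`. -/
def BepsSet {p : ℕ} (μ : Measure Ω) (Y : Ω → ℝ) (X : Ω → EuclideanSpace ℝ (Fin p)) (ε : ℝ) :
    Set (EuclideanSpace ℝ (Fin p)) :=
  {x | ∃ (q : EuclideanSpace ℝ (Fin p)) (l : ℝ), ‖q‖ = 1 ∧ 0 ≤ l ∧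
    l ≤ Seps ε (cdfRV μ (cent μ Y)) (cdfRV μ (fun ω => dotp (centV μ X ω) q)) ∧ x = l • q}

/-! `0 ∈ B` by Jensen's inequality, and `β₀ ∈ B` by the conditional Jensen inequality, since the
linear model gives `E[Y₀ | X] = X₀'β₀`. Conversely, let `β ∈ B` and apply the convex order to
`ψ(s) = φ(s/2 + c)`. Since `φ` has an affine minorant and `φ(Y/2 + a) ≤ (φ(Y) + φ(2a))/2`, `ψ(Y₀)`
is integrable; hence so is `ψ(X₀'β)`, which for a suitable `c` is `φ(X'(β/2))`. So `β = 0`. -/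

section ConvexOrder

variable {α : Type*} {mα : MeasurableSpace α} {μ : Measure α} {φ : ℝ → ℝ}

namespace ConvexOn

lemma continuous_of_univ (hφ : ConvexOn ℝ univ φ) : Continuous φ :=
  continuousOn_univ.1 (hφ.continuousOn isOpen_univ)

lemma comp_mul_add (hφ : ConvexOn ℝ univ φ) (a c : ℝ) :
    ConvexOn ℝ univ (fun s => φ (a * s + c)) := by
  refine (hφ.comp_affineMap (AffineMap.lineMap c (a + c))).congr fun s _ => ?_
  simp only [Function.comp_apply, AffineMap.lineMap_apply_ring', add_sub_cancel_right, mul_comm]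

variable [IsFiniteMeasure μ] {f : α → ℝ}

-- `φ` has an affine minorant, so an integrable majorant of `φ ∘ f` suffices.
lemma integrable_comp_of_ae_le (hφ : ConvexOn ℝ univ φ) (hf : Integrable f μ) {g : α → ℝ}
    (hg : Integrable g μ) (hle : ∀ᵐ ω ∂μ, φ (f ω) ≤ g ω) :
    Integrable (fun ω => φ (f ω)) μ := by
  obtain ⟨a, c, haff⟩ := hφ.exists_affine_le_real isClosed_univ
    (hφ.continuous_of_univ.lowerSemicontinuous.lowerSemicontinuousOn univ)
  exact integrable_of_le_of_le (hφ.continuous_of_univ.comp_aestronglyMeasurable hf.1)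
    (ae_of_all _ fun ω => haff (f ω) (mem_univ _)) hle
    ((hf.const_mul a).add (integrable_const c)) hg

lemma integrable_comp_mul_add (hφ : ConvexOn ℝ univ φ) (hf : Integrable f μ)
    (hφf : Integrable (fun ω => φ (f ω)) μ) {t : ℝ} (ht₀ : 0 ≤ t) (ht₁ : t ≤ 1) (c : ℝ) :
    Integrable (fun ω => φ (t * f ω + (1 - t) * c)) μ :=
  hφ.integrable_comp_of_ae_le ((hf.const_mul t).add (integrable_const _))
    ((hφf.const_mul t).add (integrable_const ((1 - t) * φ c))) <| ae_of_all _ fun ω =>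
      hφ.2 (mem_univ (f ω)) (mem_univ c) ht₀ (sub_nonneg.2 ht₁) (by ring)

end ConvexOn

lemma convexOrdGE_const_integral [IsProbabilityMeasure μ] {A : α → ℝ} (hA : Integrable A μ) :
    ConvexOrdGE μ A (fun _ => ∫ ω, A ω ∂μ) := by
  intro φ hφ hφA
  refine ⟨integrable_const _, ?_⟩
  simpa using hφ.map_integral_le (hφ.continuousOn isOpen_univ) isClosed_univ
    (ae_of_all _ fun _ => mem_univ _) hA hφA

variable [IsFiniteMeasure μ] {A B : α → ℝ}

lemma convexOrdGE_of_condExp_ae_eq {β : Type*} [MeasurableSpace β] {X : α → β}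
    (hX : Measurable X) (hA : Integrable A μ)
    (hB : μ[A | MeasurableSpace.comap X inferInstance] =ᵐ[μ] B) : ConvexOrdGE μ A B := by
  intro φ hφ hφA
  set m := MeasurableSpace.comap X inferInstance
  have hm : m ≤ mα := hX.comap_le
  have hJensen : ∀ᵐ ω ∂μ, φ (B ω) ≤ μ[φ ∘ A | m] ω := by
    filter_upwards [hφ.map_condExp_le_of_finiteDimensional hm hA hφA, hB] with ω hω hBω
    simpa [← hBω] using hω
  have hφB : Integrable (fun ω => φ (B ω)) μ :=
    hφ.integrable_comp_of_ae_le (integrable_condExp.congr hB) integrable_condExp hJensen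
  refine ⟨hφB, ?_⟩
  calc ∫ ω, φ (B ω) ∂μ ≤ ∫ ω, μ[φ ∘ A | m] ω ∂μ :=
        integral_mono_ae hφB integrable_condExp hJensen
    _ = ∫ ω, φ (A ω) ∂μ := integral_condExp hm

lemma ConvexOrdGE.integrable_comp_mul_add (h : ConvexOrdGE μ A B) (hA : Integrable A μ)
    (hφ : ConvexOn ℝ univ φ) (hφA : Integrable (fun ω => φ (A ω)) μ) {t : ℝ} (ht₀ : 0 ≤ t)
    (ht₁ : t < 1) (c : ℝ) :
    Integrable (fun ω => φ (t * B ω + c)) μ := by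
  refine (h _ (hφ.comp_mul_add t c) ?_).1
  have hne : 1 - t ≠ 0 := by linarith
  refine (hφ.integrable_comp_mul_add hA hφA ht₀ ht₁.le (c / (1 - t))).congr
    (ae_of_all _ fun ω => ?_)
  simp only [mul_div_cancel₀ c hne]

end ConvexOrder

section IdentifiedSet

variable {p : ℕ}

lemma dotp_eq_inner (x y : EuclideanSpace ℝ (Fin p)) : dotp x y = inner ℝ x y := by
  simp [dotp, PiLp.inner_apply, mul_comm]

lemma dotp_smul_right (x y : EuclideanSpace ℝ (Fin p)) (c : ℝ) :
    dotp x (c • y) = c * dotp x y := by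
  simp only [dotp_eq_inner, inner_smul_right]

variable {μ : Measure Ω} {Y : Ω → ℝ} {X : Ω → EuclideanSpace ℝ (Fin p)}

lemma integrable_dotp (hX : Integrable X μ) (β : EuclideanSpace ℝ (Fin p)) :
    Integrable (fun ω => dotp (X ω) β) μ := by
  simpa only [dotp_eq_inner] using hX.inner_const β

lemma dotp_centV (hX : Integrable X μ) (β : EuclideanSpace ℝ (Fin p)) (ω : Ω) :
    dotp (centV μ X ω) β = dotp (X ω) β - ∫ ω', dotp (X ω') β ∂μ := by
  simp only [dotp_eq_inner, centV, real_inner_comm β, integral_inner hX, inner_sub_right]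

lemma integrable_cent [IsFiniteMeasure μ] (hY : Integrable Y μ) : Integrable (cent μ Y) μ :=
  hY.sub (integrable_const _)

lemma zero_mem_Bset [IsProbabilityMeasure μ] (hY : Integrable Y μ) : 0 ∈ Bset μ Y X := by
  have h : (fun ω => dotp (centV μ X ω) 0) = fun _ => ∫ ω, cent μ Y ω ∂μ := by
    ext
    simp [dotp, cent, integral_sub hY (integrable_const _)]
  change ConvexOrdGE μ _ _
  rw [h]
  exact convexOrdGE_const_integral (integrable_cent hY)

lemma mem_Bset_of_condExp_eq [IsProbabilityMeasure μ] (hXm : Measurable X)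
    (hX : Integrable X μ) (hY : Integrable Y μ) {α₀ : ℝ} {β₀ : EuclideanSpace ℝ (Fin p)}
    (hmod : μ[Y | MeasurableSpace.comap X inferInstance] =ᵐ[μ] fun ω => α₀ + dotp (X ω) β₀) :
    β₀ ∈ Bset μ Y X := by
  refine convexOrdGE_of_condExp_ae_eq hXm (integrable_cent hY) ?_
  have hEY : ∫ ω, Y ω ∂μ = α₀ + ∫ ω, dotp (X ω) β₀ ∂μ := by
    rw [← integral_condExp hXm.comap_le, integral_congr_ae hmod,
      integral_add (integrable_const _) (integrable_dotp hX β₀)]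
    simp
  have hcent : μ[cent μ Y | MeasurableSpace.comap X inferInstance]
      =ᵐ[μ] μ[Y | MeasurableSpace.comap X inferInstance] - fun _ => ∫ ω, Y ω ∂μ := by
    have h := condExp_sub hY (integrable_const (∫ ω, Y ω ∂μ))
      (MeasurableSpace.comap X inferInstance)
    rwa [condExp_const hXm.comap_le] at h
  filter_upwards [hcent, hmod] with ω h₁ h₂
  rw [h₁, Pi.sub_apply, h₂, dotp_centV hX, hEY]
  ring

lemma eq_zero_of_mem_Bset [IsFiniteMeasure μ] {φ : ℝ → ℝ} (hφ : ConvexOn ℝ univ φ)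
    (hY : Integrable Y μ) (hφY : Integrable (fun ω => φ (Y ω)) μ) (hX : Integrable X μ)
    (hφX : ∀ β : EuclideanSpace ℝ (Fin p), β ≠ 0 → ¬ Integrable (fun ω => φ (dotp (X ω) β)) μ)
    {β : EuclideanSpace ℝ (Fin p)} (hβ : β ∈ Bset μ Y X) : β = 0 := by
  by_contra hβ₀
  set EY := ∫ ω, Y ω ∂μ
  have hφY₀ : Integrable (fun ω => φ (1 * cent μ Y ω + EY)) μ :=
    hφY.congr (ae_of_all _ fun ω => by simp [cent, EY])
  have hφ_half := hβ.integrable_comp_mul_add (integrable_cent hY) (hφ.comp_mul_add 1 EY) hφY₀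
    (t := 1 / 2) (by norm_num) (by norm_num) ((∫ ω, dotp (X ω) β ∂μ) / 2 - EY)
  refine hφX ((1 / 2 : ℝ) • β) (smul_ne_zero (by norm_num) hβ₀)
    (hφ_half.congr (ae_of_all _ fun ω => ?_))
  dsimp only
  rw [dotp_centV hX, dotp_smul_right]
  ring_nf

end IdentifiedSet

theorem stmt5_general (μ : Measure Ω) [IsProbabilityMeasure μ] {p : ℕ}
    (Y : Ω → ℝ) (X : Ω → EuclideanSpace ℝ (Fin p))
    (hXm : Measurable X)
    (hY2 : MemLp Y 2 μ) (hX2 : MemLp X 2 μ)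
    (α₀ : ℝ) (β₀ : EuclideanSpace ℝ (Fin p))
    (hmod : μ[Y | MeasurableSpace.comap X inferInstance]
      =ᵐ[μ] fun ω => α₀ + dotp (X ω) β₀)
    (φ : ℝ → ℝ) (hφ : ConvexOn ℝ Set.univ φ)
    (hφY : Integrable (fun ω => φ (Y ω)) μ)
    (hφX : ∀ β : EuclideanSpace ℝ (Fin p), β ≠ 0 →
      ¬ Integrable (fun ω => φ (dotp (X ω) β)) μ) :
    Bset μ Y X = {0} ∧ β₀ = 0 := by
  have hY := hY2.integrable one_le_two
  have hX := hX2.integrable one_le_two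
  have hB : Bset μ Y X ⊆ {0} := fun β hβ => eq_zero_of_mem_Bset hφ hY hφY hX hφX hβ
  exact ⟨hB.antisymm (singleton_subset_iff.2 (zero_mem_Bset hY)),
    hB (mem_Bset_of_condExp_eq hXm hX hY hmod)⟩

/-- Under Assumption 1, if `φ` is convex with `E[φ(Y)] < ∞` and
`E[φ(X'β)] = ∞` for all `β ≠ 0`, then the identified set is `{0}`; in particular
`β₀ = 0`. -/
theorem stmt5 (μ : Measure Ω) [IsProbabilityMeasure μ] {p : ℕ}
    (Y : Ω → ℝ) (X : Ω → EuclideanSpace ℝ (Fin p))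
    (hYm : Measurable Y) (hXm : Measurable X)
    (hY2 : MemLp Y 2 μ) (hX2 : MemLp X 2 μ)
    (hVarY : 0 < variance Y μ) (hVarX : (covMatrix μ X).det ≠ 0)
    (α₀ : ℝ) (β₀ : EuclideanSpace ℝ (Fin p))
    (hmod : μ[Y | MeasurableSpace.comap X inferInstance]
      =ᵐ[μ] fun ω => α₀ + dotp (X ω) β₀)
    (φ : ℝ → ℝ) (hφ : ConvexOn ℝ Set.univ φ)
    (hφY : Integrable (fun ω => φ (Y ω)) μ)
    (hφX : ∀ β : EuclideanSpace ℝ (Fin p), β ≠ 0 →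
      ¬ Integrable (fun ω => φ (dotp (X ω) β)) μ) :
    Bset μ Y X = {0} ∧ β₀ = 0 :=
  stmt5_general μ Y X hXm hY2 hX2 α₀ β₀ hmod φ hφ hφY hφX
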